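/- arXiv:1505.06394 — 11 statements merged into one kernel-verified Lean document; each statement's English description precedes it below -/
import Mathlib

section
/- For all integers r ≥ 1 and s ≥ 2, the discrete polynomials T^r_s satisfy the second recurrence T^r_s(i) = T^r_{s-1}(i) + T(i+s+r-2)·T^{r-1}_{s-1}(i). -/
variable {R : Type*} [CommRing R]

/-- Discrete polynomials `T^r_s(i)` (case `h = n = 1`), with the convention
`T^0_s = 1` and `T^r_s = 0` for `s = 0`, `r ≥ 1`. -/
def Tp (T : ℤ → R) : ℕ → ℕ → ℤ → R
  | 0, _, _ => 1
  | _ + 1, 0, _ => 0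
  | r + 1, s + 1, i => Tp T (r + 1) s (i + 1) + T i * Tp T r s (i + 2)

/-- Discrete polynomials `S^r_s(i)` (case `h = n = 1`). -/
def Sp (T : ℤ → R) : ℕ → ℕ → ℤ → R
  | 0, _, _ => 1
  | _ + 1, 0, _ => 0
  | r + 1, 1, i => ∏ q ∈ Finset.range (r + 1), T (i + q)
  | r + 1, s + 2, i => Sp T (r + 1) (s + 1) (i + 1) + T (i + r) * Sp T r (s + 2) i
  termination_by r s _ => r + s


lemma Tp_key (T : ℤ → R) : ∀ (s r : ℕ) (i : ℤ),
    Tp T (r + 1) (s + 1) i = Tp T (r + 1) s i + T (i + s + r) * Tp T r s i := by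
  intro s
  induction s with
  | zero =>
    intro r i
    cases r with
    | zero => simp [Tp]
    | succ r' => simp [Tp]
  | succ s ih =>
    intro r i
    cases r with
    | zero =>
      have h1 : Tp T 1 (s + 1 + 1) i = Tp T 1 (s + 1) (i + 1) + T i * Tp T 0 (s + 1) (i + 2) := rfl
      have h2 : Tp T 1 (s + 1) i = Tp T 1 s (i + 1) + T i * Tp T 0 s (i + 2) := rfl
      rw [h1, h2, ih 0 (i + 1)]
      simp [Tp]

      ring
    | succ r' =>
      have h1 : Tp T (r' + 1 + 1) (s + 1 + 1) i
          = Tp T (r' + 1 + 1) (s + 1) (i + 1) + T i * Tp T (r' + 1) (s + 1) (i + 2) := rfl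
      have h2 : Tp T (r' + 1 + 1) (s + 1) i
          = Tp T (r' + 1 + 1) s (i + 1) + T i * Tp T (r' + 1) s (i + 2) := rfl
      have h3 : Tp T (r' + 1) (s + 1) i
          = Tp T (r' + 1) s (i + 1) + T i * Tp T r' s (i + 2) := rfl
      rw [h1, h2, h3, ih (r' + 1) (i + 1), ih r' (i + 2)]
      push_cast
      ring

/-- For all `r ≥ 1`, `s ≥ 2`:
`T^r_s(i) = T^r_{s-1}(i) + T(i+s+r-2)·T^{r-1}_{s-1}(i)`. -/
theorem Tp_second_recurrence (T : ℤ → R) (r s : ℕ) (hr : 1 ≤ r) (hs : 2 ≤ s) (i : ℤ) :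
    Tp T r s i =
      Tp T r (s - 1) i + T (i + (s : ℤ) + (r : ℤ) - 2) * Tp T (r - 1) (s - 1) i := by
  obtain ⟨r', rfl⟩ : ∃ r', r = r' + 1 := ⟨r - 1, by omega⟩
  obtain ⟨s', rfl⟩ : ∃ s', s = s' + 1 := ⟨s - 1, by omega⟩
  have := Tp_key T s' r' i
  simpa [show (↑(s' + 1) : ℤ) = s' + 1 by push_cast; ring] using this.trans (by ring_nf)
end

section
/- For all integers r ≥ 1 and s ≥ 2, the discrete polynomials S^r_s satisfy the second recurrence S^r_s(i) = S^r_{s-1}(i) + T(i+s-1)·S^{r-1}_s(i+1). -/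
variable {R : Type*} [CommRing R]

lemma Sp_lem1 (T : ℤ → R) : ∀ s : ℕ, ∀ i : ℤ, Sp T 1 (s+2) i = Sp T 1 (s+1) i + T (i + s + 1) := by
  intro s
  induction s with
  | zero => intro i; simp [Sp]; ring_nf
  | succ s ih =>
    intro i
    conv_lhs => rw [Sp]
    rw [ih (i+1)]
    conv_rhs => rw [Sp]
    simp [Sp]
    ring_nf

lemma Sp_one (T : ℤ → R) (r : ℕ) (i : ℤ) :
    Sp T (r+1) 1 i = ∏ q ∈ Finset.range (r+1), T (i+q) := by
  rw [Sp]

lemma Sp_lem0 (T : ℤ → R) : ∀ r : ℕ, ∀ i : ℤ, Sp T (r+1) 2 i = Sp T (r+1) 1 i + T (i + 1) * Sp T r 2 (i+1) := by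
  intro r
  induction r with
  | zero => intro i; simp [Sp]; ring
  | succ r ih =>
    intro i
    have h := ih i
    have h1 : (∏ q ∈ Finset.range (r+2), T (i+1+q)) = T (i+1) * ∏ q ∈ Finset.range (r+1), T (i+2+q) := by
      rw [Finset.prod_range_succ']; push_cast; ring_nf
    have h2 : (∏ q ∈ Finset.range (r+2), T (i+q)) = (∏ q ∈ Finset.range (r+1), T (i+q)) * T (i+r+1) := by
      rw [Finset.prod_range_succ]; push_cast; ring_nf
    have e1 := Sp_one T (r+1) (i+1)
    have e2 := Sp_one T r (i+2)
    simp only [Sp] at h ⊢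
    push_cast at h h1 h2 e1 e2 ⊢
    linear_combination (norm := ring_nf) h1 - h2 + T (i + (r:ℤ) + 1) * h + e1 - T (i+1) * e2

lemma Sp_key (T : ℤ → R) : ∀ n : ℕ, ∀ r s : ℕ, r + s ≤ n → ∀ i : ℤ,
    Sp T (r+1) (s+2) i = Sp T (r+1) (s+1) i + T (i + s + 1) * Sp T r (s+2) (i+1) := by
  intro n
  induction n with
  | zero =>
    intro r s h i
    obtain ⟨rfl, rfl⟩ : r = 0 ∧ s = 0 := by omega
    simpa [Sp] using Sp_lem0 T 0 i
  | succ n ih =>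
    intro r s h i
    match r, s with
    | 0, s => simpa [Sp] using Sp_lem1 T s i
    | r+1, 0 => simpa using Sp_lem0 T (r+1) i
    | r+1, s+1 =>
      have h1 := ih (r+1) s (by omega) (i+1)
      have h2 := ih r (s+1) (by omega) i
      simp only [Sp] at h1 h2 ⊢
      push_cast at h1 h2 ⊢
      linear_combination (norm := ring_nf) h1 + T (i + (r:ℤ) + 1) * h2

/-- For all `r ≥ 1`, `s ≥ 2`:
`S^r_s(i) = S^r_{s-1}(i) + T(i+s-1)·S^{r-1}_s(i+1)`. -/
theorem Sp_second_recurrence (T : ℤ → R) (r s : ℕ) (hr : 1 ≤ r) (hs : 2 ≤ s) (i : ℤ) :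
    Sp T r s i = Sp T r (s - 1) i + T (i + (s : ℤ) - 1) * Sp T (r - 1) s (i + 1) := by
  obtain ⟨r, rfl⟩ : ∃ r', r = r' + 1 := ⟨r - 1, by omega⟩
  obtain ⟨s, rfl⟩ : ∃ s', s = s' + 2 := ⟨s - 2, by omega⟩
  have := Sp_key T (r + s) r s le_rfl i
  push_cast at this ⊢
  convert this using 3 <;> push_cast <;> ring
end

section
/- For all integers r, s ≥ 1 and every i, the alternating sum Σ_{j=0}^{r} (-1)^j · T^{r-j}_s(i) · S^{j}_s(i + r - j) equals 0. -/
variable {R : Type*} [CommRing R]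

lemma Sp_rec (T : ℤ → R) (r s : ℕ) (i : ℤ) :
    Sp T (r+1) (s+1) i = Sp T (r+1) s (i+1) + T (i+r) * Sp T r (s+1) i := by
  cases s with
  | zero =>
    cases r with
    | zero => simp [Sp.eq_1, Sp.eq_2, Sp.eq_3]
    | succ r =>
      rw [show ((r:ℕ)+1+1) = (r+1).succ from rfl, Sp.eq_3, Sp.eq_3, Sp.eq_2,
        Finset.prod_range_succ]
      push_cast
      ring
  | succ s => rw [Sp.eq_4]

/-- The alternating sum. -/
def Fs (T : ℤ → R) (r s : ℕ) (i : ℤ) : R :=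
  ∑ j ∈ Finset.range (r + 1), (-1 : R) ^ j * Tp T (r - j) s i * Sp T j s (i + (r : ℤ) - (j : ℤ))

lemma Fs_zero_r (T : ℤ → R) (s : ℕ) (i : ℤ) : Fs T 0 s i = 1 := by
  simp [Fs, Tp.eq_1, Sp.eq_1]

lemma Fs_zero_s (T : ℤ → R) (r : ℕ) (i : ℤ) : Fs T (r+1) 0 i = 0 := by
  unfold Fs
  apply Finset.sum_eq_zero
  intro j hj
  simp only [Finset.mem_range] at hj
  by_cases h : j ≤ r
  · rw [show r + 1 - j = (r - j) + 1 by omega, Tp.eq_2]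
    ring
  · rw [show j = r + 1 by omega, Sp.eq_2]
    ring

lemma Fs_rec (T : ℤ → R) (r s : ℕ) (i : ℤ) :
    Fs T (r+1) (s+1) i =
      Fs T (r+1) s (i+1) + T i * Fs T r s (i+2) - T (i + (r:ℤ)) * Fs T r (s+1) i := by
  have key : ∀ j ∈ Finset.range (r + 2),
      (-1:R)^j * Tp T (r+1-j) (s+1) i * Sp T j (s+1) (i + ((r+1:ℕ):ℤ) - (j:ℤ))
        = ((-1:R)^j * Tp T (r+1-j) s (i+1) * Sp T j s ((i+1) + ((r+1:ℕ):ℤ) - (j:ℤ)))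
          + (if j ≤ r then
              (-1:R)^j * Tp T (r-j) s (i+2) * Sp T j s ((i+2) + (r:ℤ) - (j:ℤ)) * T i
            else 0)
          + (if j = 0 then 0 else
              -(T (i + (r:ℤ)) *
                ((-1:R)^(j-1) * Tp T (r-(j-1)) (s+1) i * Sp T (j-1) (s+1) (i + (r:ℤ) - ((j-1:ℕ):ℤ))))) := by
    intro j hj
    simp only [Finset.mem_range] at hj
    match j with
    | 0 =>
      rw [if_pos (Nat.zero_le r), if_pos rfl]
      simp only [Nat.sub_zero, Nat.add_sub_cancel]
      rw [Tp.eq_3, Sp.eq_1, Sp.eq_1, Sp.eq_1]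
      push_cast
      ring
    | (k+1) =>
      have hk : k ≤ r := by omega
      have hsp : Sp T (k+1) (s+1) (i + ((r+1:ℕ):ℤ) - ((k+1:ℕ):ℤ))
          = Sp T (k+1) s ((i+1) + ((r+1:ℕ):ℤ) - ((k+1:ℕ):ℤ))
            + T (i + (r:ℤ)) * Sp T k (s+1) (i + (r:ℤ) - (k:ℤ)) := by
        have h1 := Sp_rec T k s (i + ((r+1:ℕ):ℤ) - ((k+1:ℕ):ℤ))
        rw [show (i + ((r+1:ℕ):ℤ) - ((k+1:ℕ):ℤ)) + (k:ℤ) = i + (r:ℤ) by push_cast; ring,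
          show (i + ((r+1:ℕ):ℤ) - ((k+1:ℕ):ℤ)) + 1 = (i+1) + ((r+1:ℕ):ℤ) - ((k+1:ℕ):ℤ) by ring,
          show (i + ((r+1:ℕ):ℤ) - ((k+1:ℕ):ℤ)) = i + (r:ℤ) - (k:ℤ) by push_cast; ring] at h1
        rw [show (i + ((r+1:ℕ):ℤ) - ((k+1:ℕ):ℤ)) = i + (r:ℤ) - (k:ℤ) by push_cast; ring]
        exact h1
      rw [hsp]
      simp only [Nat.add_sub_cancel, if_neg (Nat.succ_ne_zero k)]
      have hsub : r + 1 - (k+1) = r - k := by omega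
      rw [hsub]
      rcases Nat.lt_or_ge k r with hkr | hkr
      · obtain ⟨m, hm⟩ : ∃ m, r - k = m + 1 := ⟨r - k - 1, by omega⟩
        rw [if_pos (by omega : k+1 ≤ r), hm, Tp.eq_3,
          show r - (k+1) = m by omega]
        push_cast
        ring
      · have hk' : k = r := by omega
        subst hk'
        rw [if_neg (by omega : ¬ k+1 ≤ k), Nat.sub_self, Tp.eq_1, Tp.eq_1]
        push_cast
        ring
  calc Fs T (r+1) (s+1) i
      = ∑ j ∈ Finset.range (r+2),
          (((-1:R)^j * Tp T (r+1-j) s (i+1) * Sp T j s ((i+1) + ((r+1:ℕ):ℤ) - (j:ℤ)))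
          + (if j ≤ r then
              (-1:R)^j * Tp T (r-j) s (i+2) * Sp T j s ((i+2) + (r:ℤ) - (j:ℤ)) * T i
            else 0)
          + (if j = 0 then 0 else
              -(T (i + (r:ℤ)) *
                ((-1:R)^(j-1) * Tp T (r-(j-1)) (s+1) i * Sp T (j-1) (s+1) (i + (r:ℤ) - ((j-1:ℕ):ℤ)))))) := by
        unfold Fs
        exact Finset.sum_congr rfl key
    _ = Fs T (r+1) s (i+1) + T i * Fs T r s (i+2) - T (i + (r:ℤ)) * Fs T r (s+1) i := by
        rw [Finset.sum_add_distrib, Finset.sum_add_distrib]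
        have hC : (∑ j ∈ Finset.range (r+2), if j ≤ r then
              (-1:R)^j * Tp T (r-j) s (i+2) * Sp T j s ((i+2) + (r:ℤ) - (j:ℤ)) * T i
            else 0) = T i * Fs T r s (i+2) := by
          rw [Finset.sum_range_succ, if_neg (by omega : ¬ r+1 ≤ r), add_zero,
            Fs, Finset.mul_sum]
          refine Finset.sum_congr rfl fun j hj => ?_
          simp only [Finset.mem_range] at hj
          rw [if_pos (by omega : j ≤ r)]
          ring
        have hD : (∑ j ∈ Finset.range (r+2), if j = 0 then 0 else
              -(T (i + (r:ℤ)) *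
                ((-1:R)^(j-1) * Tp T (r-(j-1)) (s+1) i * Sp T (j-1) (s+1) (i + (r:ℤ) - ((j-1:ℕ):ℤ)))))
            = -(T (i + (r:ℤ)) * Fs T r (s+1) i) := by
          rw [Finset.sum_range_succ', if_pos rfl, add_zero, Fs, Finset.mul_sum,
            ← Finset.sum_neg_distrib]
          refine Finset.sum_congr rfl fun j hj => ?_
          rw [if_neg (Nat.succ_ne_zero j)]
          simp only [Nat.add_sub_cancel]
        rw [hC, hD, sub_eq_add_neg]
        rfl

/-- Identity `(T,S)^r_s(i) = Σ_{j=0}^{r} (-1)^j T^{r-j}_s(i) S^{j}_s(i+r-j) = 0`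
for all `r, s ≥ 1`. -/
theorem TS_identity (T : ℤ → R) (r s : ℕ) (hr : 1 ≤ r) (hs : 1 ≤ s) (i : ℤ) :
    ∑ j ∈ Finset.range (r + 1),
      (-1 : R) ^ j * Tp T (r - j) s i * Sp T j s (i + (r : ℤ) - (j : ℤ)) = 0 := by
  have main : ∀ s r i, Fs T (r+1) s i = 0 := by
    intro s
    induction s with
    | zero => exact fun r i => Fs_zero_s T r i
    | succ s ih =>
      intro r
      induction r with
      | zero =>
        intro i
        rw [Fs_rec, ih 0 (i+1), Fs_zero_r, Fs_zero_r]
        simp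
      | succ r ihr =>
        intro i
        have h := Fs_rec T (r+1) s i
        rw [show ((r:ℕ)+1+1) = r+2 from rfl] at h
        rw [h, show Fs T (r+2) s (i+1) = 0 from ih (r+1) (i+1),
          show Fs T (r+1) s (i+2) = 0 from ih r (i+2),
          show Fs T (r+1) (s+1) i = 0 from ihr i]
        ring
  obtain ⟨r', rfl⟩ : ∃ r', r = r' + 1 := ⟨r - 1, by omega⟩
  exact main s r' i
end

section
/- For all integers s ≥ 1 and r with r ≥ s (so 1 ≤ s ≤ r), the factorization identity S^r_s(i) = S^{s-1}_{r+1}(i) · ∏_{q=s-1}^{r-1} T(i+q) holds for every i. -/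
variable {R : Type*} [CommRing R]

/-!
Besides its defining recursion, which peels off `T (i + r - 1)`, the family `S` satisfies a
transposed recursion `S^{r+1}_{s+1}(i) = S^{r+1}_s(i) + T(i+s) · S^r_{s+1}(i+1)`, peeling off
`T (i + s)`. Expanding the left side of the factorization by the defining recursion and the
right side by the transposed one, the two sides satisfy the same recursion in `(r, s)`, so the
identity follows by induction on `r + s`. The base cases are `s = 1`, where both sides are
`T(i) ⋯ T(i+r-1)`, and `s = r + 1`, where the product is empty.
-/

open Finset

lemma prod_Ico_shift {M : Type*} [CommMonoid M] (f : ℤ → M) (a b : ℕ) (i : ℤ) :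
    ∏ q ∈ Ico a b, f (i + 1 + q) = ∏ q ∈ Ico (a + 1) (b + 1), f (i + q) := by
  rw [← prod_Ico_add' (fun q : ℕ => f (i + q))]
  push_cast
  exact prod_congr rfl fun q _ => by ring_nf

section

variable (T : ℤ → R)

@[simp]
lemma Sp_zero_left (s : ℕ) (i : ℤ) : Sp T 0 s i = 1 := by
  rw [Sp]

@[simp]
lemma Sp_succ_zero (r : ℕ) (i : ℤ) : Sp T (r + 1) 0 i = 0 := by
  rw [Sp]

lemma Sp_one_right (r : ℕ) (i : ℤ) : Sp T r 1 i = ∏ q ∈ range r, T (i + q) := by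
  cases r <;> simp [Sp]

lemma Sp_succ_succ (r s : ℕ) (i : ℤ) :
    Sp T (r + 1) (s + 1) i = Sp T (r + 1) s (i + 1) + T (i + r) * Sp T r (s + 1) i := by
  cases s with
  | zero => rw [Sp_one_right, Sp_one_right, Sp_succ_zero, prod_range_succ]; ring
  | succ s => rw [Sp]

lemma Sp_one_left (s : ℕ) (i : ℤ) : Sp T 1 s i = ∑ q ∈ range s, T (i + q) := by
  induction s generalizing i with
  | zero => simp
  | succ s ih =>
    rw [Sp_succ_succ, ih, sum_range_succ']
    push_cast
    simp only [Sp_zero_left, add_zero, mul_one]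
    congr 1
    exact sum_congr rfl fun q _ => by ring_nf

theorem Sp_succ_succ' : ∀ (r s : ℕ) (i : ℤ),
    Sp T (r + 1) (s + 1) i = Sp T (r + 1) s i + T (i + s) * Sp T r (s + 1) (i + 1)
  | r, 0, i => by
    rw [Sp_one_right, Sp_one_right, Sp_succ_zero, prod_range_succ']
    simp only [Nat.cast_zero, add_zero, Nat.cast_add, Nat.cast_one, zero_add]
    rw [mul_comm]
    congr 1
    exact prod_congr rfl fun q _ => by ring_nf
  | 0, s + 1, i => by
    simp only [zero_add, Sp_one_left, Sp_zero_left, sum_range_succ]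
    ring
  | r + 1, s + 1, i => by
    have h₁ := Sp_succ_succ' (r + 1) s (i + 1)
    have h₂ := Sp_succ_succ' r (s + 1) i
    rw [Sp_succ_succ T (r + 1) (s + 1) i, Sp_succ_succ T (r + 1) s i,
      Sp_succ_succ T r (s + 1) (i + 1)]
    push_cast at h₁ h₂ ⊢
    rw [show i + 1 + (s : ℤ) = i + (s + 1) by ring] at h₁
    rw [show i + 1 + (r : ℤ) = i + (r + 1) by ring]
    linear_combination h₁ + T (i + (r + 1)) * h₂
termination_by r s => r + s

theorem Sp_succ_succ_eq_mul_prod : ∀ (r s : ℕ), s ≤ r + 1 → ∀ i : ℤ,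
    Sp T (r + 1) (s + 1) i = Sp T s (r + 2) i * ∏ q ∈ Ico s (r + 1), T (i + q)
  | r, 0, _, i => by rw [Sp_one_right, Sp_zero_left, one_mul, range_eq_Ico]
  | 0, s + 1, h, i => by
    obtain rfl : s = 0 := by omega
    simp
  | r + 1, s + 1, h, i => by
    obtain rfl | hsr : s = r + 1 ∨ s ≤ r := by omega
    · simp
    have h₁ := Sp_succ_succ_eq_mul_prod (r + 1) s (by omega) (i + 1)
    have h₂ := Sp_succ_succ_eq_mul_prod r (s + 1) (by omega) i
    have hP₁ := prod_Ico_succ_top (show s + 1 ≤ r + 1 by omega) fun q : ℕ => T (i + q)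
    have hP₂ := prod_Ico_succ_top (show s + 1 ≤ r + 2 by omega) fun q : ℕ => T (i + q)
    rw [prod_Ico_shift, hP₂, hP₁] at h₁
    rw [Sp_succ_succ T (r + 1) (s + 1) i, hP₁, Sp_succ_succ' T s (r + 2) i]
    push_cast at h₁ h₂ ⊢
    linear_combination h₁ + T (i + (r + 1)) * h₂
termination_by r s => r + s

end

/-- Factorization identity: for `1 ≤ s ≤ r`,
`S^r_s(i) = S^{s-1}_{r+1}(i) · ∏_{q=s-1}^{r-1} T(i+q)`. -/
theorem Sp_factorization (T : ℤ → R) (r s : ℕ) (hs : 1 ≤ s) (hsr : s ≤ r) (i : ℤ) :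
    Sp T r s i = Sp T (s - 1) (r + 1) i * ∏ q ∈ Finset.Icc (s - 1) (r - 1), T (i + q) := by
  obtain ⟨a, rfl⟩ : ∃ a, s = a + 1 := ⟨s - 1, by omega⟩
  obtain ⟨b, rfl⟩ : ∃ b, r = b + 1 := ⟨r - 1, by omega⟩
  rw [Nat.add_sub_cancel, Nat.add_sub_cancel, ← Ico_add_one_right_eq_Icc]
  exact Sp_succ_succ_eq_mul_prod T b a (by omega) i
end

section
/- Suppose the sequence T is periodic with period N = s + r - 1, i.e. T(i + s + r - 1) = T(i) for all i. Then for r ≥ 2, s ≥ 2 the polynomial P^r_s(i) = T^r_s(i) - T(i)·T(i+s+r-2)·T^{r-2}_{s-2}(i+2) is constant in i: P^r_s(i+1) = P^r_s(i) for all i. -/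
variable {R : Type*} [CommRing R]

/-- Discrete polynomials `P^r_s(i) = T^r_s(i) - T(i)·T(i+s+r-2)·T^{r-2}_{s-2}(i+2)`. -/
def Pp (T : ℤ → R) (r s : ℕ) (i : ℤ) : R :=
  Tp T r s i - T i * T (i + (s : ℤ) + (r : ℤ) - 2) * Tp T (r - 2) (s - 2) (i + 2)

/-- The recurrence for `Tp` "from the other end":
`T^r_s(i) = T^r_{s-1}(i) + T(i+s+r-2)·T^{r-1}_{s-1}(i)`. -/
lemma Tp_rec2 (T : ℤ → R) (r s : ℕ) (i : ℤ) :
    Tp T (r+1) (s+1) i = Tp T (r+1) s i + T (i + s + r) * Tp T r s i := by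
  induction s generalizing r i with
  | zero =>
    cases r with
    | zero => simp [Tp]
    | succ r => simp [Tp]
  | succ s ih =>
    cases r with
    | zero =>
      have h1 := ih 0 (i + 1)
      simp only [Tp] at *
      push_cast at *; ring_nf at *;
      linear_combination h1
    | succ r =>
      have h1 := ih (r + 1) (i + 1)
      have h2 := ih r (i + 2)
      simp only [Tp] at *
      push_cast at *; ring_nf at *;
      linear_combination h1 + T i * h2

/-- If `T` is periodic with period `N = s + r - 1`, then `P^r_s` is constant in `i`. -/
theorem Pp_first_integral_of_periodic (T : ℤ → R) (r s : ℕ) (hr : 2 ≤ r) (hs : 2 ≤ s)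
    (hper : ∀ i : ℤ, T (i + (s : ℤ) + (r : ℤ) - 1) = T i) (i : ℤ) :
    Pp T r s (i + 1) = Pp T r s i := by
  obtain ⟨a, rfl⟩ : ∃ a, r = a + 2 := ⟨r - 2, by omega⟩
  obtain ⟨b, rfl⟩ : ∃ b, s = b + 2 := ⟨s - 2, by omega⟩
  have hp1 : T (i + a + b + 3) = T i := by
    have := hper i; push_cast at this; ring_nf at this ⊢; exact this
  have h1 : Tp T (a+2) (b+2) i
      = Tp T (a+2) (b+1) (i+1) + T i * Tp T (a+1) (b+1) (i+2) := by
    simp only [Tp]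
  have h2 : Tp T (a+2) (b+2) (i+1)
      = Tp T (a+2) (b+1) (i+1) + T i * Tp T (a+1) (b+1) (i+1) := by
    have := Tp_rec2 T (a+1) (b+1) (i+1)
    push_cast at this; ring_nf at this
    rw [show Tp T (a+2) (b+2) (i+1) = Tp T (2+a) (2+b) (1+i) by ring_nf]
    rw [this]
    ring_nf
    rw [show (3:ℤ) + i + ↑b + ↑a = i + ↑a + ↑b + 3 by ring, hp1]; ring
  have h3 : Tp T (a+1) (b+1) (i+1)
      = Tp T (a+1) b (i+2) + T (i+1) * Tp T a b (i+3) := by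
    simp only [Tp]; ring_nf
  have h4 : Tp T (a+1) (b+1) (i+2)
      = Tp T (a+1) b (i+2) + T (i + a + b + 2) * Tp T a b (i+2) := by
    have := Tp_rec2 T a b (i+2)
    rw [this]; ring_nf
  simp only [Pp, Nat.add_sub_cancel]
  push_cast
  have e1 : T (i + 1 + ((b:ℤ) + 2) + ((a:ℤ) + 2) - 2) = T i := by
    rw [show i + 1 + ((b:ℤ) + 2) + ((a:ℤ) + 2) - 2 = i + ↑a + ↑b + 3 by ring, hp1]
  have e2 : T (i + ((b:ℤ) + 2) + ((a:ℤ) + 2) - 2) = T (i + a + b + 2) := by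
    ring_nf
  rw [e1, e2]
  ring_nf at h1 h2 h3 h4 ⊢
  linear_combination h2 - h1 + T i * h3 - T i * h4
end

section
/- For a sequence T of nonzero values in a field, if T satisfies the order-(s+1) recurrence T(i+s+1) = (T(i+1)/T(i+s))·(Σ_{j=0}^{s} T(i+j) - H₁) - Σ_{j=1}^{s} T(i+j) + H₁ for all i (where H₁ is a constant), then J(i) := (Σ_{j=0}^{s} T(i+j) - H₁)·∏_{q=1}^{s-1} T(i+q) is a first integral: J(i+1) = J(i) for all i. -/
/-- For the `(1,s)`-th equation, `J(i) = (Σ_{j=0}^{s} T(i+j) - H₁)·∏_{q=1}^{s-1} T(i+q)`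
is a first integral. -/
theorem first_integral_1s {K : Type*} [Field K] (s : ℕ) (hs : 2 ≤ s) (H₁ : K)
    (T : ℤ → K) (hT : ∀ i, T i ≠ 0)
    (heq : ∀ i : ℤ, T (i + (s : ℤ) + 1) =
      T (i + 1) / T (i + (s : ℤ)) * ((∑ j ∈ Finset.range (s + 1), T (i + j)) - H₁) -
        (∑ j ∈ Finset.Icc 1 s, T (i + j)) + H₁) (i : ℤ) :
    ((∑ j ∈ Finset.range (s + 1), T (i + 1 + j)) - H₁) *
        ∏ q ∈ Finset.Icc 1 (s - 1), T (i + 1 + q) =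
      ((∑ j ∈ Finset.range (s + 1), T (i + j)) - H₁) *
        ∏ q ∈ Finset.Icc 1 (s - 1), T (i + q) := by
  obtain ⟨m, rfl⟩ : ∃ m, s = m + 2 := ⟨s - 2, by omega⟩
  have hsum : ∀ (c : ℤ) (n : ℕ), (∑ j ∈ Finset.Icc 1 n, T (c + j)) =
      ∑ j ∈ Finset.range n, T (c + 1 + j) := by
    intro c n
    rw [← Finset.Ico_add_one_right_eq_Icc, Finset.sum_Ico_eq_sum_range]
    apply Finset.sum_congr rfl
    intro j _
    congr 1
    push_cast
    ring
  have hprod : ∀ (c : ℤ) (n : ℕ), (∏ q ∈ Finset.Icc 1 n, T (c + q)) =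
      ∏ q ∈ Finset.range n, T (c + 1 + q) := by
    intro c n
    rw [← Finset.Ico_add_one_right_eq_Icc, Finset.prod_Ico_eq_prod_range]
    apply Finset.prod_congr rfl
    intro j _
    congr 1
    push_cast
    ring
  have hshift : ∀ (c : ℤ) (n : ℕ), (∑ j ∈ Finset.range (n + 1), T (c + j)) =
      T c + ∑ j ∈ Finset.range n, T (c + 1 + j) := by
    intro c n
    rw [Finset.sum_range_succ']
    simp only [Nat.cast_zero, add_zero]
    rw [add_comm]
    congr 1
    apply Finset.sum_congr rfl
    intro j _
    congr 1
    push_cast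
    ring
  set A : K := ∑ j ∈ Finset.range (m + 2), T (i + 1 + j) with hA
  have sum0 : (∑ j ∈ Finset.range (m + 2 + 1), T (i + j)) = T i + A := by
    rw [hshift]
  have sum1 : (∑ j ∈ Finset.range (m + 2 + 1), T (i + 1 + j)) = A + T (i + (m : ℤ) + 3) := by
    rw [Finset.sum_range_succ, hA]
    congr 1
    push_cast
    ring
  have p0 : (∏ q ∈ Finset.Icc 1 (m + 2 - 1), T (i + q)) =
      ∏ q ∈ Finset.range (m + 1), T (i + 1 + q) := hprod i (m + 1)
  have p1 : (∏ q ∈ Finset.Icc 1 (m + 2 - 1), T (i + 1 + q)) =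
      ∏ q ∈ Finset.range (m + 1), T (i + 2 + q) := by
    rw [show m + 2 - 1 = m + 1 from rfl, hprod (i + 1) (m + 1)]
    apply Finset.prod_congr rfl
    intro j _
    congr 1
    ring
  have prodkey : T (i + 1) * ∏ q ∈ Finset.range (m + 1), T (i + 2 + q) =
      T (i + (m : ℤ) + 2) * ∏ q ∈ Finset.range (m + 1), T (i + 1 + q) := by
    have l : (∏ q ∈ Finset.range (m + 2), T (i + 1 + q)) =
        T (i + 1) * ∏ q ∈ Finset.range (m + 1), T (i + 2 + q) := by
      rw [Finset.prod_range_succ']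
      simp only [Nat.cast_zero, add_zero]
      rw [mul_comm]
      congr 1
      apply Finset.prod_congr rfl
      intro j _
      congr 1
      push_cast
      ring
    have r : (∏ q ∈ Finset.range (m + 2), T (i + 1 + q)) =
        T (i + (m : ℤ) + 2) * ∏ q ∈ Finset.range (m + 1), T (i + 1 + q) := by
      rw [Finset.prod_range_succ, mul_comm]
      congr 2
      push_cast
      ring
    rw [← l, r]
  have hrec := heq i
  rw [show ((i : ℤ) + ((m : ℕ) + 2 : ℕ) + 1) = i + (m : ℤ) + 3 by push_cast; ring,
    show ((i : ℤ) + ((m : ℕ) + 2 : ℕ)) = i + (m : ℤ) + 2 by push_cast; ring,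
    sum0, hsum i (m + 2), ← hA] at hrec
  have hTs := hT (i + (m : ℤ) + 2)
  have S1 : A + T (i + (m : ℤ) + 3) - H₁ =
      T (i + 1) * (T i + A - H₁) / T (i + (m : ℤ) + 2) := by
    rw [hrec]
    field_simp
    ring
  rw [sum0, sum1, p0, p1, S1, div_mul_eq_mul_div, div_eq_iff hTs]
  linear_combination (T i + A - H₁) * prodkey
end

section
/- If a sequence T in a field with nonzero values satisfies the (k,s)-th equation T(i+k)·S̃^k_{s+1}(i) = T(i+s)·S̃^k_{s+1}(i+1) for all i, then the function G₀^{(k,s)}(i) := S̃^k_{s+1}(i)·∏_{q=k}^{s-1} T(i+q) satisfies G₀^{(k,s)}(i+1) = G₀^{(k,s)}(i) for all i, i.e. it is a first integral. -/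
variable {R : Type*} [CommRing R]

/-- Non-homogeneous polynomials `S̃^r_s(i) = Σ_{j=0}^r (-1)^j H_j S^{r-j}_{s-j}(i+j)`. -/
def Stil (T : ℤ → R) (H : ℕ → R) (r s : ℕ) (i : ℤ) : R :=
  ∑ j ∈ Finset.range (r + 1), (-1 : R) ^ j * H j * Sp T (r - j) (s - j) (i + j)

/-- If `T` satisfies the `(k,s)`-th equation `T(i+k)·S̃^k_{s+1}(i) = T(i+s)·S̃^k_{s+1}(i+1)`,
then `G₀^{(k,s)}(i) = S̃^k_{s+1}(i)·∏_{q=k}^{s-1} T(i+q)` is a first integral. -/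
theorem G0_first_integral {K : Type*} [Field K] (T : ℤ → K) (hT : ∀ i, T i ≠ 0)
    (k s : ℕ) (hk : 1 ≤ k) (hs : k + 1 ≤ s) (H : ℕ → K) (hH0 : H 0 = 1)
    (heq : ∀ i : ℤ, T (i + (k : ℤ)) * Stil T H k (s + 1) i =
      T (i + (s : ℤ)) * Stil T H k (s + 1) (i + 1)) (i : ℤ) :
    Stil T H k (s + 1) (i + 1) * ∏ q ∈ Finset.Icc k (s - 1), T (i + 1 + q) =
      Stil T H k (s + 1) i * ∏ q ∈ Finset.Icc k (s - 1), T (i + q) := by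
  have hIcc : Finset.Icc k (s - 1) = Finset.Ico k s := by
    ext q; simp only [Finset.mem_Icc, Finset.mem_Ico]; omega
  rw [hIcc]
  set f : ℕ → K := fun q => T (i + q) with hf
  have hshift : (∏ q ∈ Finset.Ico k s, T (i + 1 + q)) = ∏ q ∈ Finset.Ico (k + 1) (s + 1), f q := by
    rw [← Finset.prod_Ico_add' f k s 1]
    apply Finset.prod_congr rfl
    intro q _
    simp only [hf]
    push_cast
    ring_nf
  have htop : (∏ q ∈ Finset.Ico (k + 1) (s + 1), f q)
      = (∏ q ∈ Finset.Ico (k + 1) s, f q) * f s := Finset.prod_Ico_succ_top (by omega) f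
  have hbot : (∏ q ∈ Finset.Ico k s, f q) = f k * ∏ q ∈ Finset.Ico (k + 1) s, f q :=
    Finset.prod_eq_prod_Ico_succ_bot (by omega) f
  have hfq : (∏ q ∈ Finset.Ico k s, T (i + q)) = ∏ q ∈ Finset.Ico k s, f q := rfl
  rw [hshift, htop, hfq, hbot]
  have := heq i
  simp only [hf]
  linear_combination (∏ q ∈ Finset.Ico (k + 1) s, T (i + (q:ℤ))) * this.symm
end

section
/- For all integers r ≥ 0, k ≥ 1, s ≥ k + 2r + 2 and all i, the following identity holds: G_r^{(k,s)}(i) - G_{r+1}^{(k-1,s)}(i) = S^r_{s-k-r}(i+k)·S̃^{k+r}_{s-r}(i+1)·∏_{q=k+r}^{s-r-1} T(i+q) - S^{r+1}_{s-k-r-1}(i+k)·S̃^{k+r}_{s-r}(i)·∏_{q=k+r}^{s-r-2} T(i+q), where G_r^{(k,s)}(i) = Σ_{j=0}^{r} Q^j_{s-k-j-1}(i+k+1)·G_0^{(k+j,s-j)}(i) and G_0^{(k,s)}(i) = S̃^k_{s+1}(i)·∏_{q=k}^{s-1} T(i+q). -/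
variable {R : Type*} [CommRing R]

/-- Discrete polynomials `Q^r_s(i) = S^r_s(i) - T(i+r-2)·T(i+s)·S^{r-2}_{s+2}(i)`
(for `r ≥ 2`), with `Q^0_s = 1` and `Q^1_s = S^1_s`. -/
def Qp (T : ℤ → R) : ℕ → ℕ → ℤ → R
  | 0, _, _ => 1
  | 1, s, i => Sp T 1 s i
  | r + 2, s, i => Sp T (r + 2) s i - T (i + r) * T (i + s) * Sp T r (s + 2) i

/-- `G₀^{(k,s)}(i) = S̃^k_{s+1}(i)·∏_{q=k}^{s-1} T(i+q)`. -/
def G0 (T : ℤ → R) (H : ℕ → R) (k s : ℕ) (i : ℤ) : R :=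
  Stil T H k (s + 1) i * ∏ q ∈ Finset.Icc k (s - 1), T (i + q)

/-- `G_r^{(k,s)}(i) = Σ_{j=0}^{r} Q^j_{s-k-j-1}(i+k+1)·G₀^{(k+j,s-j)}(i)`. -/
def Gr (T : ℤ → R) (H : ℕ → R) (r k s : ℕ) (i : ℤ) : R :=
  ∑ j ∈ Finset.range (r + 1), Qp T j (s - k - j - 1) (i + (k : ℤ) + 1) * G0 T H (k + j) (s - j) i

@[simp] lemma sp_zero (T : ℤ → R) (s : ℕ) (i : ℤ) : Sp T 0 s i = 1 := by
  unfold Sp; rfl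

@[simp] lemma sp_s0 (T : ℤ → R) (r : ℕ) (i : ℤ) : Sp T (r+1) 0 i = 0 := by
  unfold Sp; rfl

lemma sp_one (T : ℤ → R) (r : ℕ) (i : ℤ) :
    Sp T (r+1) 1 i = ∏ q ∈ Finset.range (r + 1), T (i + q) := by
  unfold Sp; rfl

lemma sp_rec1 (T : ℤ → R) (r s : ℕ) (i : ℤ) :
    Sp T (r+1) (s+1) i = Sp T (r+1) s (i+1) + T (i + r) * Sp T r (s+1) i := by
  match s with
  | 0 =>
    rw [sp_one, sp_s0]
    rcases r with _ | r'
    · simp [Finset.prod_range_succ]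
    · rw [sp_one, Finset.prod_range_succ]
      push_cast
      ring
  | s + 1 =>
    conv_lhs => rw [Sp]

lemma sp_rec2 (T : ℤ → R) (s : ℕ) : ∀ r : ℕ, ∀ i : ℤ,
    Sp T (r+1) (s+1) i = Sp T (r+1) s i + T (i + s) * Sp T r (s+1) (i+1) := by
  induction s with
  | zero =>
    intro r i
    rcases r with _ | r'
    · simp [sp_one]
    · rw [sp_one, sp_one, sp_s0, Finset.prod_range_succ']
      push_cast
      ring
  | succ s ih =>
    intro r
    induction r with
    | zero =>
      intro i
      have h1 := sp_rec1 T 0 (s+1) i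
      have h2 := sp_rec1 T 0 s i
      have h3 := ih 0 (i+1)
      simp only [sp_zero] at *
      push_cast at *
      ring_nf at h1 h2 h3 ⊢
      linear_combination h1 + h3 - h2
    | succ r' ihr =>
      intro i
      have h1 := sp_rec1 T (r'+1) (s+1) i
      have ha := ih (r'+1) (i+1)
      have hb := ihr i
      have h4 := sp_rec1 T (r'+1) s i
      have h5 := sp_rec1 T r' (s+1) (i+1)
      push_cast at *
      ring_nf at h1 ha hb h4 h5 ⊢
      linear_combination h1 + ha + T (1+i+(r':ℤ))*hb - h4 - T (1+i+(s:ℤ))*h5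

lemma stil_rec1 (T : ℤ → R) (H : ℕ → R) (a m : ℕ) (h : a ≤ m) (i : ℤ) :
    Stil T H (a+1) (m+1) i = Stil T H (a+1) m (i+1) + T (i + a) * Stil T H a (m+1) i := by
  unfold Stil
  have key : ∀ j ∈ Finset.range (a+1), (-1:R)^j * H j * Sp T (a+1-j) (m+1-j) (i+j)
      = (-1:R)^j * H j * Sp T (a+1-j) (m-j) (i+1+j)
        + T (i+a) * ((-1:R)^j * H j * Sp T (a-j) (m+1-j) (i+j)) := by
    intro j hj
    have hj' : j ≤ a := by simp at hj; omega
    have e := sp_rec1 T (a-j) (m-j) (i+j)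
    have c1 : a+1-j = a-j+1 := by omega
    have c2 : m+1-j = m-j+1 := by omega
    have c3 : ((a-j : ℕ) : ℤ) = (a:ℤ) - j := by push_cast [hj']; ring
    rw [c1, c2, e, c3]
    have c4 : i + (j:ℤ) + ((a:ℤ) - j) = i + a := by ring
    have c5 : i + (j:ℤ) + 1 = i + 1 + j := by ring
    rw [c4, c5]
    ring
  rw [Finset.sum_range_succ, Finset.sum_range_succ ((fun j => (-1:R)^j * H j * Sp T (a+1-j) (m-j) (i+1+j))) (a+1),
    Finset.sum_congr rfl key, Finset.sum_add_distrib, ← Finset.mul_sum]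
  simp only [Nat.sub_self, sp_zero]
  ring

lemma stil_rec2 (T : ℤ → R) (H : ℕ → R) (a m : ℕ) (h : a ≤ m) (i : ℤ) :
    Stil T H (a+1) (m+1) i = Stil T H (a+1) m i + T (i + m) * Stil T H a (m+1) (i+1) := by
  unfold Stil
  have key : ∀ j ∈ Finset.range (a+1), (-1:R)^j * H j * Sp T (a+1-j) (m+1-j) (i+j)
      = (-1:R)^j * H j * Sp T (a+1-j) (m-j) (i+j)
        + T (i+m) * ((-1:R)^j * H j * Sp T (a-j) (m+1-j) (i+1+j)) := by
    intro j hj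
    have hj' : j ≤ a := by simp at hj; omega
    have e := sp_rec2 T (m-j) (a-j) (i+j)
    have c1 : a+1-j = a-j+1 := by omega
    have c2 : m+1-j = m-j+1 := by omega
    have c3 : ((m-j : ℕ) : ℤ) = (m:ℤ) - j := by push_cast [show j ≤ m by omega]; ring
    rw [c1, c2, e, c3]
    have c4 : i + (j:ℤ) + ((m:ℤ) - j) = i + m := by ring
    have c5 : i + (j:ℤ) + 1 = i + 1 + j := by ring
    rw [c4, c5]
    ring
  rw [Finset.sum_range_succ, Finset.sum_range_succ ((fun j => (-1:R)^j * H j * Sp T (a+1-j) (m-j) (i+j))) (a+1),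
    Finset.sum_congr rfl key, Finset.sum_add_distrib, ← Finset.mul_sum]
  simp only [Nat.sub_self, sp_zero]
  ring

lemma qp_one (T : ℤ → R) (s : ℕ) (i : ℤ) : Qp T 1 s i = Sp T 1 s i := by unfold Qp; rfl
lemma qp_two (T : ℤ → R) (r s : ℕ) (i : ℤ) :
    Qp T (r+2) s i = Sp T (r+2) s i - T (i + r) * T (i + s) * Sp T r (s+2) i := by unfold Qp; rfl
lemma prod_bot (f : ℕ → R) (a b : ℕ) (h : a ≤ b) :
    ∏ q ∈ Finset.Icc a b, f q = f a * ∏ q ∈ Finset.Icc (a+1) b, f q := by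
  rw [← Finset.Ico_add_one_right_eq_Icc, ← Finset.Ico_add_one_right_eq_Icc, Finset.prod_eq_prod_Ico_succ_bot (by omega)]

lemma step_id (T : ℤ → R) (H : ℕ → R) (r d k' : ℕ) (i : ℤ) :
    Sp T r (r+4+d) (i+(k':ℤ)+1) * Stil T H (k'+r+1) (k'+r+5+d) (i+1) *
        (∏ q ∈ Finset.Icc (k'+r+1) (k'+r+4+d), T (i+q))
      - Sp T (r+1) (r+3+d) (i+(k':ℤ)+1) * Stil T H (k'+r+1) (k'+r+5+d) i *
        (∏ q ∈ Finset.Icc (k'+r+1) (k'+r+3+d), T (i+q))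
      + Qp T (r+1) (r+2+d) (i+(k':ℤ)+2) * Stil T H (k'+r+2) (k'+r+5+d) i *
        (∏ q ∈ Finset.Icc (k'+r+2) (k'+r+3+d), T (i+q))
      - Qp T (r+2) (r+2+d) (i+(k':ℤ)+1) * Stil T H (k'+r+2) (k'+r+4+d) i *
        (∏ q ∈ Finset.Icc (k'+r+2) (k'+r+2+d), T (i+q))
    = Sp T (r+1) (r+3+d) (i+(k':ℤ)+1) * Stil T H (k'+r+2) (k'+r+4+d) (i+1) *
        (∏ q ∈ Finset.Icc (k'+r+2) (k'+r+3+d), T (i+q))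
      - Sp T (r+2) (r+2+d) (i+(k':ℤ)+1) * Stil T H (k'+r+2) (k'+r+4+d) i *
        (∏ q ∈ Finset.Icc (k'+r+2) (k'+r+2+d), T (i+q)) := by
  have hC := stil_rec1 T H (k'+r+1) (k'+r+4+d) (by omega) i
  have hD := stil_rec2 T H (k'+r+1) (k'+r+4+d) (by omega) i
  have hP : (∏ q ∈ Finset.Icc (k'+r+2) (k'+r+3+d), T (i+q))
      = (∏ q ∈ Finset.Icc (k'+r+2) (k'+r+2+d), T (i+q)) * T (i+(k'+r+3+d:ℕ)) := by
    rw [show k'+r+3+d = (k'+r+2+d)+1 from by omega, Finset.prod_Icc_succ_top (by omega)]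
  have hP0 : (∏ q ∈ Finset.Icc (k'+r+1) (k'+r+3+d), T (i+q))
      = T (i+(k'+r+1:ℕ)) * ∏ q ∈ Finset.Icc (k'+r+2) (k'+r+3+d), T (i+q) := by
    rw [prod_bot _ _ _ (by omega), show k'+r+1+1 = k'+r+2 from by omega]
  have hPm : (∏ q ∈ Finset.Icc (k'+r+1) (k'+r+4+d), T (i+q))
      = T (i+(k'+r+1:ℕ)) * (∏ q ∈ Finset.Icc (k'+r+2) (k'+r+3+d), T (i+q)) * T (i+(k'+r+4+d:ℕ)) := by
    rw [prod_bot _ _ _ (by omega), show k'+r+1+1 = k'+r+2 from by omega,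
      show k'+r+4+d = (k'+r+3+d)+1 from by omega, Finset.prod_Icc_succ_top (by omega)]
    ring
  rcases r with _ | rr
  · -- r = 0
    rw [qp_one, qp_two]
    have h3 := sp_rec1 T 0 (2+d) (i+(k':ℤ)+1)
    simp only [sp_zero] at h3 ⊢
    push_cast at *
    ring_nf at h3 hC hD hP hP0 hPm ⊢
    linear_combination
      (Stil T H (1+k') (5+d+k') (1+i)) * hPm
      - (Sp T 1 (3+d) (1+i+(k':ℤ)) * Stil T H (1+k') (5+d+k') i) * hP0
      - (T (1+i+(k':ℤ)) * Stil T H (2+k') (4+d+k') i) * hP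
      - ((∏ x ∈ Finset.Icc (2+k') (3+d+k'), T (i+(x:ℤ))) * Stil T H (2+k') (5+d+k') i) * h3
      - ((∏ x ∈ Finset.Icc (2+k') (3+d+k'), T (i+(x:ℤ))) * T (1+i+(k':ℤ))) * hD
      + ((∏ x ∈ Finset.Icc (2+k') (3+d+k'), T (i+(x:ℤ))) * Sp T 1 (3+d) (1+i+(k':ℤ))) * hC
  · -- r = rr + 1
    rw [qp_two, qp_two]
    have h3 := sp_rec1 T (rr+1) (rr+3+d) (i+(k':ℤ)+1)
    have h4 := sp_rec2 T (rr+4+d) rr (i+(k':ℤ)+1)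
    push_cast at *
    ring_nf at h3 h4 hC hD hP hP0 hPm ⊢
    linear_combination
      (Sp T (1+rr) (5+rr+d) (1+i+(k':ℤ)) * Stil T H (2+rr+k') (6+rr+d+k') (1+i)) * hPm
      - (Sp T (2+rr) (4+rr+d) (1+i+(k':ℤ)) * Stil T H (2+rr+k') (6+rr+d+k') i) * hP0
      - (T (2+i+(k':ℤ)+(rr:ℤ)) * Sp T (1+rr) (5+rr+d) (1+i+(k':ℤ)) * Stil T H (3+rr+k') (5+rr+d+k') i) * hP
      - ((∏ x ∈ Finset.Icc (3+rr+k') (4+rr+d+k'), T (i+(x:ℤ))) * Stil T H (3+rr+k') (6+rr+d+k') i) * h3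
      - ((∏ x ∈ Finset.Icc (3+rr+k') (4+rr+d+k'), T (i+(x:ℤ))) * T (2+i+(k':ℤ)+(rr:ℤ)) * Sp T (1+rr) (5+rr+d) (1+i+(k':ℤ))) * hD
      + ((∏ x ∈ Finset.Icc (3+rr+k') (4+rr+d+k'), T (i+(x:ℤ))) * T (2+i+(k':ℤ)+(rr:ℤ)) * Stil T H (3+rr+k') (6+rr+d+k') i) * h4
      + ((∏ x ∈ Finset.Icc (3+rr+k') (4+rr+d+k'), T (i+(x:ℤ))) * Sp T (2+rr) (4+rr+d) (1+i+(k':ℤ))) * hC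

lemma qp_zero (T : ℤ → R) (s : ℕ) (i : ℤ) : Qp T 0 s i = 1 := by unfold Qp; rfl

lemma gr_zero (T : ℤ → R) (H : ℕ → R) (k s : ℕ) (i : ℤ) : Gr T H 0 k s i = G0 T H k s i := by
  unfold Gr
  simp [qp_zero]

lemma gr_succ (T : ℤ → R) (H : ℕ → R) (r k s : ℕ) (i : ℤ) :
    Gr T H (r+1) k s i = Gr T H r k s i
      + Qp T (r+1) (s - k - (r+1) - 1) (i + (k:ℤ) + 1) * G0 T H (k + (r+1)) (s - (r+1)) i := by
  unfold Gr
  rw [Finset.sum_range_succ]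

lemma main_aux (T : ℤ → R) (H : ℕ → R) (k' r : ℕ) : ∀ d : ℕ, ∀ i : ℤ,
    Gr T H r (k'+1) (k'+2*r+3+d) i - Gr T H (r+1) k' (k'+2*r+3+d) i =
      Sp T r (r+2+d) (i+(k':ℤ)+1) * Stil T H (k'+r+1) (k'+r+3+d) (i+1) *
          (∏ q ∈ Finset.Icc (k'+r+1) (k'+r+2+d), T (i+q))
        - Sp T (r+1) (r+1+d) (i+(k':ℤ)+1) * Stil T H (k'+r+1) (k'+r+3+d) i *
          (∏ q ∈ Finset.Icc (k'+r+1) (k'+r+1+d), T (i+q)) := by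
  induction r with
  | zero =>
    intro d i
    rw [gr_zero, gr_succ, gr_zero]
    simp only [Nat.zero_add, Nat.add_zero, Nat.mul_zero, qp_one, G0]
    simp only [show k'+3+d - k' - 1 - 1 = 1+d from by omega,
      show k'+3+d - 1 = k'+2+d from by omega,
      show k'+3+d + 1 = k'+4+d from by omega,
      show k'+2+d - 1 = k'+1+d from by omega,
      show k'+2+d+1 = k'+3+d from by omega]
    have hC := stil_rec1 T H k' (k'+3+d) (by omega) i
    rw [show k'+3+d+1 = k'+4+d from by omega] at hC
    have hPb := prod_bot (fun q => T (i + (q:ℕ))) k' (k'+2+d) (by omega)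
    simp only [sp_zero]
    linear_combination (∏ x ∈ Finset.Icc (k'+1) (k'+2+d), T (i+(x:ℤ))) * hC
      - Stil T H k' (k'+4+d) i * hPb
  | succ r ih =>
    intro d i
    rw [gr_succ T H (r+1), gr_succ T H r (k'+1)]
    have IH := ih (d+2) i
    simp only [show k'+2*r+3+(d+2) = k'+2*(r+1)+3+d from by omega,
      show r+2+(d+2) = r+4+d from by omega,
      show r+1+(d+2) = r+3+d from by omega,
      show k'+r+3+(d+2) = k'+r+5+d from by omega,
      show k'+r+2+(d+2) = k'+r+4+d from by omega,
      show k'+r+1+(d+2) = k'+r+3+d from by omega] at IH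
    have hst := step_id T H r d k' i
    simp only [G0]
    simp only [show k'+2*(r+1)+3+d - (k'+1) - (r+1) - 1 = r+2+d from by omega,
      show k'+2*(r+1)+3+d - k' - (r+1+1) - 1 = r+2+d from by omega,
      show k'+2*(r+1)+3+d - (r+1) = k'+r+4+d from by omega,
      show k'+2*(r+1)+3+d - (r+1+1) = k'+r+3+d from by omega,
      show k'+r+4+d - 1 = k'+r+3+d from by omega,
      show k'+r+3+d - 1 = k'+r+2+d from by omega,
      show k'+r+4+d+1 = k'+r+5+d from by omega,
      show k'+r+3+d+1 = k'+r+4+d from by omega,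
      show k'+1+(r+1) = k'+r+2 from by omega,
      show k'+(r+1+1) = k'+r+2 from by omega,
      show r+1+1 = r+2 from by omega,
      show r+1+2+d = r+3+d from by omega,
      show r+1+1+d = r+2+d from by omega,
      show k'+(r+1)+1 = k'+r+2 from by omega,
      show k'+(r+1)+2+d = k'+r+3+d from by omega,
      show k'+(r+1)+3+d = k'+r+4+d from by omega,
      show k'+(r+1)+1+d = k'+r+2+d from by omega,
      show ((k'+1:ℕ):ℤ) = (k':ℤ)+1 from by push_cast; ring]
    rw [show (i + ((k':ℤ)+1) + 1) = i + (k':ℤ) + 2 from by ring]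
    linear_combination IH + hst

/-- Lemma 5 (technical lemma): for `r ≥ 0`, `k ≥ 1`, `s ≥ k + 2r + 2`,
`G_r^{(k,s)}(i) - G_{r+1}^{(k-1,s)}(i)
  = S^r_{s-k-r}(i+k)·S̃^{k+r}_{s-r}(i+1)·∏_{q=k+r}^{s-r-1} T(i+q)
  - S^{r+1}_{s-k-r-1}(i+k)·S̃^{k+r}_{s-r}(i)·∏_{q=k+r}^{s-r-2} T(i+q)`. -/
theorem Gr_difference_identity (T : ℤ → R) (H : ℕ → R) (hH0 : H 0 = 1)
    (r k s : ℕ) (hk : 1 ≤ k) (hs : k + 2 * r + 2 ≤ s) (i : ℤ) :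
    Gr T H r k s i - Gr T H (r + 1) (k - 1) s i =
      Sp T r (s - k - r) (i + (k : ℤ)) * Stil T H (k + r) (s - r) (i + 1) *
          ∏ q ∈ Finset.Icc (k + r) (s - r - 1), T (i + q) -
        Sp T (r + 1) (s - k - r - 1) (i + (k : ℤ)) * Stil T H (k + r) (s - r) i *
          ∏ q ∈ Finset.Icc (k + r) (s - r - 2), T (i + q) := by
  obtain ⟨k', rfl⟩ : ∃ k', k = k' + 1 := ⟨k - 1, by omega⟩
  obtain ⟨d, rfl⟩ : ∃ d, s = k' + 2*r + 3 + d := ⟨s - (k' + 2*r + 3), by omega⟩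
  have h := main_aux T H k' r d i
  simp only [show k'+1-1 = k' from by omega,
    show k'+2*r+3+d - (k'+1) - r = r+2+d from by omega,
    show k'+2*r+3+d - (k'+1) - r - 1 = r+1+d from by omega,
    show r+2+d - 1 = r+1+d from by omega,
    show k'+2*r+3+d - r = k'+r+3+d from by omega,
    show k'+r+3+d - 1 = k'+r+2+d from by omega,
    show k'+r+3+d - 2 = k'+r+1+d from by omega,
    show k'+1+r = k'+r+1 from by omega,
    show ((k'+1:ℕ):ℤ) = (k':ℤ)+1 from by push_cast; ring]
  rw [show i + ((k':ℤ)+1) = i + (k':ℤ) + 1 from by ring]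
  linear_combination h
end

section
/- For a sequence T of nonzero values in a field satisfying the (k,s)-th equation T(i+k+s)·T̃^k_{s-1}(i+1) = T(i)·T̃^k_{s-1}(i+2) for all i, the function F₀^{(k,s)}(i) := T̃^k_{s-1}(i+1) / ∏_{q=0}^{s+k-1} T(i+q) satisfies F₀^{(k,s)}(i+1) = F₀^{(k,s)}(i) for all i, i.e. it is a first integral. -/
variable {R : Type*} [CommRing R]

/-- Non-homogeneous polynomials `T̃^k_s(i) = Σ_{j=0}^k c_j T^{k-j}_{s+j}(i)`. -/
def Ttil (T : ℤ → R) (c : ℕ → R) (k s : ℕ) (i : ℤ) : R :=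
  ∑ j ∈ Finset.range (k + 1), c j * Tp T (k - j) (s + j) i

lemma prod_shift {K : Type*} [Field K] (T : ℤ → K) (n : ℕ) (i : ℤ) :
    (∏ q ∈ Finset.range n, T (i + 1 + q)) * T i =
      (∏ q ∈ Finset.range n, T (i + q)) * T (i + n) := by
  have h1 := Finset.prod_range_succ' (fun q : ℕ => T (i + q)) n
  have h2 := Finset.prod_range_succ (fun q : ℕ => T (i + q)) n
  rw [h2] at h1
  have e : ∏ q ∈ Finset.range n, T (i + 1 + (q:ℤ)) =
      ∏ q ∈ Finset.range n, T (i + ((q + 1 : ℕ) : ℤ)) :=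
    Finset.prod_congr rfl (fun q _ => by congr 1; push_cast; ring)
  rw [e]
  simpa using h1.symm

/-- If `T` satisfies the `(k,s)`-th equation
`T(i+k+s)·T̃^k_{s-1}(i+1) = T(i)·T̃^k_{s-1}(i+2)`, then
`F₀^{(k,s)}(i) = T̃^k_{s-1}(i+1) / ∏_{q=0}^{s+k-1} T(i+q)` is a first integral. -/
theorem F0_first_integral {K : Type*} [Field K] (T : ℤ → K) (hT : ∀ i, T i ≠ 0)
    (k s : ℕ) (hk : 1 ≤ k) (hs : k + 1 ≤ s) (c : ℕ → K) (hc0 : c 0 = 1)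
    (heq : ∀ i : ℤ, T (i + (k : ℤ) + (s : ℤ)) * Ttil T c k (s - 1) (i + 1) =
      T i * Ttil T c k (s - 1) (i + 2)) (i : ℤ) :
    Ttil T c k (s - 1) (i + 1 + 1) / ∏ q ∈ Finset.range (s + k), T (i + 1 + q) =
      Ttil T c k (s - 1) (i + 1) / ∏ q ∈ Finset.range (s + k), T (i + q) := by
  have hp1 : (∏ q ∈ Finset.range (s + k), T (i + 1 + q)) ≠ 0 :=
    Finset.prod_ne_zero_iff.2 fun q _ => hT _
  have hp0 : (∏ q ∈ Finset.range (s + k), T (i + q)) ≠ 0 :=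
    Finset.prod_ne_zero_iff.2 fun q _ => hT _
  rw [div_eq_div_iff hp1 hp0]
  have hps := prod_shift T (s + k) i
  have h := heq i
  have hTi := hT i
  have h' : T (i + ((s + k : ℕ) : ℤ)) * Ttil T c k (s - 1) (i + 1)
      = T i * Ttil T c k (s - 1) (i + 2) := by
    rw [show i + ((s + k : ℕ) : ℤ) = i + (k : ℤ) + (s : ℤ) by push_cast; ring]; exact h
  have hii : (i : ℤ) + 1 + 1 = i + 2 := by ring
  rw [hii]
  have key : Ttil T c k (s - 1) (i + 2) * (∏ q ∈ Finset.range (s + k), T (i + q)) * T i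
      = Ttil T c k (s - 1) (i + 1) * (∏ q ∈ Finset.range (s + k), T (i + 1 + q)) * T i := by
    linear_combination (-(∏ q ∈ Finset.range (s + k), T (i + (q:ℤ)))) * h' -
      Ttil T c k (s - 1) (i + 1) * hps
  exact mul_right_cancel₀ hTi key
end

section
/- For a field-valued sequence T with nonzero values and s ≥ 2, if T satisfies T(i+s+1) = T(i)·(T^1_{s-2}(i+2) + c₁)/(T^1_{s-2}(i+1) + c₁) for all i (the (1,s)-th equation of class (122) with parameter c₁, where T^1_m(i) = Σ_{j=0}^{m-1} T(i+j)), then F(i) := (T^1_{s-2}(i+1) + c₁)/∏_{q=0}^{s} T(i+q) satisfies F(i+1) = F(i) for all i. -/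
/-- For the `(1,s)`-th equation of class (122) with parameter `c₁`,
`F(i) = (T^1_{s-2}(i+1) + c₁)/∏_{q=0}^{s} T(i+q)` is a first integral.
Here `T^1_m(i) = Σ_{j=0}^{m-1} T(i+j)`. -/
theorem F_first_integral_1s {K : Type*} [Field K] (s : ℕ) (hs : 2 ≤ s) (c₁ : K)
    (T : ℤ → K) (hT : ∀ i, T i ≠ 0)
    (hden : ∀ i : ℤ, (∑ j ∈ Finset.range (s - 2), T (i + 1 + j)) + c₁ ≠ 0)
    (heq : ∀ i : ℤ, T (i + (s : ℤ) + 1) =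
      T i * ((∑ j ∈ Finset.range (s - 2), T (i + 2 + j)) + c₁) /
        ((∑ j ∈ Finset.range (s - 2), T (i + 1 + j)) + c₁)) (i : ℤ) :
    ((∑ j ∈ Finset.range (s - 2), T (i + 1 + 1 + j)) + c₁) /
        ∏ q ∈ Finset.range (s + 1), T (i + 1 + q) =
      ((∑ j ∈ Finset.range (s - 2), T (i + 1 + j)) + c₁) /
        ∏ q ∈ Finset.range (s + 1), T (i + q) := by
  have hP : ∀ k : ℤ, (∏ q ∈ Finset.range (s + 1), T (k + q)) ≠ 0 := fun k =>
    Finset.prod_ne_zero_iff.mpr fun q _ => hT _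
  have hA2 : (∑ j ∈ Finset.range (s - 2), T (i + 1 + 1 + j)) =
      ∑ j ∈ Finset.range (s - 2), T (i + 2 + j) := by
    apply Finset.sum_congr rfl
    intro j _
    ring_nf
  rw [hA2, div_eq_div_iff (hP _) (hP _)]
  have hprod : T i * ∏ q ∈ Finset.range (s + 1), T (i + 1 + q) =
      (∏ q ∈ Finset.range (s + 1), T (i + q)) * T (i + s + 1) := by
    have h1 := Finset.prod_range_succ' (fun q : ℕ => T (i + q)) (s + 1)
    have h2 := Finset.prod_range_succ (fun q : ℕ => T (i + q)) (s + 1)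
    simp only [Nat.cast_zero, add_zero] at h1
    push_cast at h1
    have h3 : (∏ x ∈ Finset.range (s + 1), T (i + (↑x + 1))) =
        ∏ q ∈ Finset.range (s + 1), T (i + 1 + q) := by
      apply Finset.prod_congr rfl
      intro q _
      ring_nf
    rw [h3] at h1
    rw [h2] at h1
    push_cast at h1
    have h4 : i + ((s : ℤ) + 1) = i + s + 1 := by ring
    rw [h4] at h1
    linear_combination -h1
  have hkey : T (i + s + 1) * ((∑ j ∈ Finset.range (s - 2), T (i + 1 + j)) + c₁) =
      T i * ((∑ j ∈ Finset.range (s - 2), T (i + 2 + j)) + c₁) := by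
    rw [heq i, div_mul_cancel₀ _ (hden i)]
  apply mul_left_cancel₀ (hT i)
  linear_combination (-(∏ q ∈ Finset.range (s + 1), T (i + q))) * hkey +
    (-((∑ j ∈ Finset.range (s - 2), T (i + 1 + j)) + c₁)) * hprod
end

section
/- Consider the birational map φ : K⁴ → K⁴ given by φ(y₀,y₁,y₂,y₃) = (y₁, y₂, y₃, (y₁/y₃)·(y₀+y₁+y₂-H₁) - y₂ - y₃ + H₁), where H₁ ∈ K is a parameter and all relevant denominators are nonzero. Then the three functions G₀ = (y₀+y₁+y₂+y₃-H₁)·y₁·y₂, 𝒢₁ = y₀y₁y₂y₃ + (y₁+y₂)(y₀+y₁+y₂+y₃-H₁)·y₁·y₂, and ℱ₂ = y₀y₂ + y₁y₃ - (y₁+y₂)(y₀+y₁+y₂+y₃-H₁) are invariant under φ: each composed with φ equals itself. -/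
/-!
Clearing the denominator `y₃` turns the map into the (1,3) recurrence
`y₃ (y₂ + y₃ + y₄ - H₁) = y₁ (y₀ + y₁ + y₂ - H₁)`, a polynomial relation between five
consecutive terms. Each invariant, evaluated at the shifted point minus its value at the original
point, is a polynomial multiple of this relation, so invariance holds over any commutative ring.
-/

namespace OneThreeEquation

theorem step_of_eq_div {K : Type*} [Field K] {H₁ y₀ y₁ y₂ y₃ y₄ : K}
    (h3 : y₃ ≠ 0) (hy₄ : y₄ = y₁ / y₃ * (y₀ + y₁ + y₂ - H₁) - y₂ - y₃ + H₁) :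
    y₃ * (y₂ + y₃ + y₄ - H₁) = y₁ * (y₀ + y₁ + y₂ - H₁) := by
  subst hy₄; field_simp; ring

section Invariants

variable {R : Type*} [CommRing R] (H₁ : R)

def G₀ (a b c d : R) : R := (a + b + c + d - H₁) * b * c

def 𝒢₁ (a b c d : R) : R := a * b * c * d + (b + c) * (a + b + c + d - H₁) * b * c

def ℱ₂ (a b c d : R) : R := a * c + b * d - (b + c) * (a + b + c + d - H₁)

variable {H₁} {y₀ y₁ y₂ y₃ y₄ : R}
  (h : y₃ * (y₂ + y₃ + y₄ - H₁) = y₁ * (y₀ + y₁ + y₂ - H₁))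
include h

theorem G₀_shift : G₀ H₁ y₁ y₂ y₃ y₄ = G₀ H₁ y₀ y₁ y₂ y₃ := by
  unfold G₀; linear_combination y₂ * h

theorem 𝒢₁_shift : 𝒢₁ H₁ y₁ y₂ y₃ y₄ = 𝒢₁ H₁ y₀ y₁ y₂ y₃ := by
  unfold 𝒢₁; linear_combination (y₁ + y₂ + y₃) * y₂ * h

theorem ℱ₂_shift : ℱ₂ H₁ y₁ y₂ y₃ y₄ = ℱ₂ H₁ y₀ y₁ y₂ y₃ := by
  unfold ℱ₂; linear_combination -h

end Invariants

end OneThreeEquation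

open OneThreeEquation

/-- The three functions `G₀`, `𝒢₁`, `ℱ₂` are invariant under the birational shift map
`φ(y₀,y₁,y₂,y₃) = (y₁,y₂,y₃,y₄)` with
`y₄ = (y₁/y₃)·(y₀+y₁+y₂-H₁) - y₂ - y₃ + H₁`. -/
theorem invariants_of_map {K : Type*} [Field K] (H₁ y₀ y₁ y₂ y₃ : K) (h3 : y₃ ≠ 0)
    (y₄ : K) (hy₄ : y₄ = y₁ / y₃ * (y₀ + y₁ + y₂ - H₁) - y₂ - y₃ + H₁) :
    ((y₁ + y₂ + y₃ + y₄ - H₁) * y₂ * y₃ = (y₀ + y₁ + y₂ + y₃ - H₁) * y₁ * y₂) ∧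
    (y₁ * y₂ * y₃ * y₄ + (y₂ + y₃) * (y₁ + y₂ + y₃ + y₄ - H₁) * y₂ * y₃ =
      y₀ * y₁ * y₂ * y₃ + (y₁ + y₂) * (y₀ + y₁ + y₂ + y₃ - H₁) * y₁ * y₂) ∧
    (y₁ * y₃ + y₂ * y₄ - (y₂ + y₃) * (y₁ + y₂ + y₃ + y₄ - H₁) =
      y₀ * y₂ + y₁ * y₃ - (y₁ + y₂) * (y₀ + y₁ + y₂ + y₃ - H₁)) := by
  have h := step_of_eq_div h3 hy₄
  exact ⟨G₀_shift h, 𝒢₁_shift h, ℱ₂_shift h⟩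
end
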